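/- arXiv:2212.04024 — 5 statements merged into one kernel-verified Lean document; each statement's English description precedes it below -/
import Mathlib

section
/- Let U : [n] × [n] → ℝ be a nonpositive utility profile satisfying the polarity condition: U(a,x') − U(a,x) ≤ −(U(a',x) + U(a',x')) for all a, a', x, x'. Consider the complete bipartite graph K_{n,n} with parts A = [n] and X = [n], where the edge between a ∈ A and x ∈ X has weight −U(a,x). Then for every a ∈ A and x ∈ X, the shortest-path distance from a to x in this weighted graph equals the direct edge weight −U(a,x). -/
/-- The total weight of the alternating path `a → x₁ → a₁ → x₂ → ⋯ → a_k → x`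
in the weighted complete bipartite graph `K_{n,n}`, where the list records the
intermediate pairs `(x_i, a_i)`. -/
def pathWeight {n : ℕ} (w : Fin n → Fin n → ℝ) (a x : Fin n) :
    List (Fin n × Fin n) → ℝ
  | [] => w a x
  | (x₁, a₁) :: L => w a x₁ + w a₁ x₁ + pathWeight w a₁ x L

theorem stmt5 {n : ℕ} (U : Fin n × Fin n → ℝ) (hu : ∀ p, U p ≤ 0)
    (hpol : ∀ a a' x x', U (a, x') - U (a, x) ≤ -(U (a', x) + U (a', x'))) :
    ∀ a x : Fin n,
      IsLeast {r : ℝ | ∃ L : List (Fin n × Fin n),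
        pathWeight (fun a x => -U (a, x)) a x L = r} (-U (a, x)) := by
  have key : ∀ (L : List (Fin n × Fin n)) (a x : Fin n),
      -U (a, x) ≤ pathWeight (fun a x => -U (a, x)) a x L := by
    intro L
    induction L with
    | nil => intro a x; simp [pathWeight]
    | cons p L ih =>
      intro a x
      obtain ⟨x₁, a₁⟩ := p
      have h1 := ih a₁ x
      have h2 := hpol a a₁ x x₁
      simp only [pathWeight]
      linarith
  intro a x
  constructor
  · exact ⟨[], rfl⟩
  · rintro r ⟨L, rfl⟩
    exact key L a x
end

section
/- Let U be a polarized nonpositive utility profile on [n] × [n], and consider any alternating path a → x₁ → a₁ → x₂ → ⋯ → a_k → x in the complete bipartite graph with edge weights w(a,x) = −U(a,x), where a₁,…,a_k ≠ a and x₁,…,x_k ≠ x. Then the total weight of the path is at least w(a,x). -/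
theorem stmt6_aux {n : ℕ} (U : Fin n × Fin n → ℝ)
    (hpol : ∀ a a' x x', U (a, x') - U (a, x) ≤ -(U (a', x) + U (a', x')))
    (a x : Fin n) (L : List (Fin n × Fin n)) :
    pathWeight (fun a x => -U (a, x)) a x L ≥ -U (a, x) := by
  induction L generalizing a with
  | nil => simp [pathWeight]
  | cons p L ih =>
    obtain ⟨x₁, a₁⟩ := p
    have h1 := hpol a a₁ x x₁
    have h2 := ih a₁
    simp only [pathWeight] at *
    linarith

theorem stmt6 {n : ℕ} (U : Fin n × Fin n → ℝ) (hu : ∀ p, U p ≤ 0)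
    (hpol : ∀ a a' x x', U (a, x') - U (a, x) ≤ -(U (a', x) + U (a', x')))
    (a x : Fin n) (L : List (Fin n × Fin n))
    (hL : ∀ p ∈ L, p.1 ≠ x ∧ p.2 ≠ a) :
    pathWeight (fun a x => -U (a, x)) a x L ≥ -U (a, x) :=
  stmt6_aux U hpol a x L
end

section
/- Let u, u' : [n] × [n] → ℝ be strict nonpositive utility profiles inducing the same ordinal preferences (for all a,x,x': u(a,x) > u(a,x') iff u'(a,x) > u'(a,x')). If u satisfies the condition that for all a,x,x' with u(a,x) > u(a,x') one has C·u(a,x) > u(a,x'), and u' = δu for a C-perturbation δ, then u' is strict and induces the same ordinal preferences as u. -/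
theorem stmt12 {n : ℕ} (C : ℝ) (u u' δ : Fin n × Fin n → ℝ)
    (hu : ∀ p, u p ≤ 0)
    (hstrict : ∀ a x x', u (a, x) = u (a, x') → x = x')
    (hgap : ∀ a x x', u (a, x) > u (a, x') → C * u (a, x) > u (a, x'))
    (hδ : ∀ p, 1 ≤ δ p ∧ δ p ≤ C)
    (hu' : ∀ p, u' p = δ p * u p) :
    (∀ a x x', u' (a, x) = u' (a, x') → x = x') ∧
      (∀ a x x', u' (a, x) > u' (a, x') ↔ u (a, x) > u (a, x')) := by
  have key : ∀ a x x', u (a, x) > u (a, x') → u' (a, x) > u' (a, x') := by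
    intro a x x' h
    have h1 : u' (a, x) ≥ C * u (a, x) := by
      rw [hu' (a, x)]
      exact mul_le_mul_of_nonpos_right (hδ (a, x)).2 (hu (a, x))
    have h2 : u' (a, x') ≤ u (a, x') := by
      rw [hu' (a, x')]
      calc δ (a, x') * u (a, x') ≤ 1 * u (a, x') :=
            mul_le_mul_of_nonpos_right (hδ (a, x')).1 (hu (a, x'))
        _ = u (a, x') := one_mul _
    calc u' (a, x') ≤ u (a, x') := h2
      _ < C * u (a, x) := hgap a x x' h
      _ ≤ u' (a, x) := h1
  have iff2 : ∀ a x x', u' (a, x) > u' (a, x') ↔ u (a, x) > u (a, x') := by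
    intro a x x'
    constructor
    · intro h
      rcases lt_trichotomy (u (a, x')) (u (a, x)) with h' | h' | h'
      · exact h'
      · exact absurd (hstrict a x' x h') (by rintro rfl; exact lt_irrefl _ h)
      · exact absurd (key a x' x h') (not_lt.2 h.le)
    · exact key a x x'
  refine ⟨?_, iff2⟩
  intro a x x' h
  rcases lt_trichotomy (u (a, x')) (u (a, x)) with h' | h' | h'
  · exact absurd (key a x x' h') (by simp [h])
  · exact (hstrict a x' x h').symm
  · exact absurd (key a x' x h') (by simp [h])
end

section
/- Define the robustness of a strict nonpositive utility profile u as ξ(u) = min over agents a and alternatives x, x' with u(a,x) > u(a,x') of the ratio u(a,x')/u(a,x) (with the convention the minimum is over pairs where u(a,x) < 0). Then for every C with 1 ≤ C < ξ(u) and every C-perturbation δ, the profile δu induces the same ordinal preference relation as u; and for every C > ξ(u) there exists a C-perturbation δ such that δu induces a different ordinal preference relation. -/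
theorem stmt13 {n : ℕ} (u : Fin n × Fin n → ℝ)
    (hu : ∀ p, u p ≤ 0)
    (hstrict : ∀ a x x', u (a, x) = u (a, x') → x = x')
    (hneg : ∀ a x, (∃ x', u (a, x) > u (a, x')) → u (a, x) < 0)
    (ξ : ℝ)
    (hξ : IsLeast {r : ℝ | ∃ a x x', u (a, x) > u (a, x') ∧ r = u (a, x') / u (a, x)} ξ) :
    (∀ C : ℝ, 1 ≤ C → C < ξ →
      ∀ δ : Fin n × Fin n → ℝ, (∀ p, 1 ≤ δ p ∧ δ p ≤ C) →
        ∀ a x x', (δ (a, x) * u (a, x) > δ (a, x') * u (a, x')) ↔ u (a, x) > u (a, x')) ∧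
    (∀ C : ℝ, ξ < C →
      ∃ δ : Fin n × Fin n → ℝ, (∀ p, 1 ≤ δ p ∧ δ p ≤ C) ∧
        ∃ a x x', ¬((δ (a, x) * u (a, x) > δ (a, x') * u (a, x')) ↔ u (a, x) > u (a, x'))) := by
  obtain ⟨hmem, hlb⟩ := hξ
  obtain ⟨a0, x0, x0', hgt0, hx0⟩ := hmem
  have hux0 : u (a0, x0) < 0 := hneg a0 x0 ⟨x0', hgt0⟩
  have hξ1 : 1 ≤ ξ := by
    rw [hx0, le_div_iff_of_neg hux0]
    linarith
  constructor
  · intro C hC1 hC δ hδ a x x'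
    have key : ∀ y y' : Fin n, u (a, y) > u (a, y') →
        δ (a, y) * u (a, y) > δ (a, y') * u (a, y') := by
      intro y y' hgt
      have huy : u (a, y) < 0 := hneg a y ⟨y', hgt⟩
      have hr : ξ ≤ u (a, y') / u (a, y) := hlb ⟨a, y, y', hgt, rfl⟩
      have h1 : C * u (a, y) > u (a, y') := by
        have h := lt_of_lt_of_le hC hr
        rw [lt_div_iff_of_neg huy] at h
        linarith
      have h2 : δ (a, y) * u (a, y) ≥ C * u (a, y) := by
        nlinarith [(hδ (a, y)).2]
      have h3 : δ (a, y') * u (a, y') ≤ u (a, y') := by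
        nlinarith [(hδ (a, y')).1, hu (a, y')]
      linarith
    constructor
    · intro h
      by_contra hnot
      push_neg at hnot
      rcases lt_or_eq_of_le hnot with hlt | heq
      · exact absurd (key x' x hlt) (by linarith)
      · have hx : x = x' := hstrict a x x' heq
        subst hx; linarith
    · exact key x x'
  · intro C hC
    refine ⟨fun p => if p = (a0, x0) then ξ else 1, ?_, a0, x0, x0', ?_⟩
    · intro p
      by_cases h : p = (a0, x0)
      · simp only [h, if_pos rfl]
        exact ⟨hξ1, le_of_lt hC⟩
      · simp only [if_neg h]
        exact ⟨le_refl 1, le_trans hξ1 (le_of_lt hC)⟩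
    · have hne : ((a0, x0') : Fin n × Fin n) ≠ (a0, x0) := by
        intro h
        have : x0' = x0 := (Prod.mk.injEq _ _ _ _ ▸ h : _ ∧ _).2
        subst this; exact lt_irrefl _ hgt0
      beta_reduce
      rw [if_pos rfl, if_neg hne]
      have heq : ξ * u (a0, x0) = u (a0, x0') := by
        rw [hx0, div_mul_cancel₀ _ (ne_of_lt hux0)]
      rw [heq, one_mul]
      intro h
      have := h.mpr hgt0
      linarith
end

section
/- Let n ≥ 2 and let R, R' be two strict preference profiles for n men over n women with R ≠ R'. Then there exists a strict preference profile R^W for the n women over the n men such that the woman-optimal stable matching under (R, R^W) differs from the woman-optimal stable matching under (R', R^W). -/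
/-- `μ : Fin n ≃ Fin n` matches man `m` to woman `μ m`. Preferences are given by rank
functions: agent `a` prefers `x` to `x'` iff `R a x < R a x'`. A matching is stable if it
admits no blocking pair. -/
def IsStable {n : ℕ} (RM RW : Fin n → Fin n → Fin n) (μ : Fin n ≃ Fin n) : Prop :=
  ∀ m w, ¬(RM m w < RM m (μ m) ∧ RW w m < RW w (μ.symm w))

/-- The woman-optimal stable matching: stable, and every woman weakly prefers her partner
to her partner in any other stable matching. -/
def IsWomanOptimal {n : ℕ} (RM RW : Fin n → Fin n → Fin n) (μ : Fin n ≃ Fin n) : Prop :=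
  IsStable RM RW μ ∧ ∀ ν : Fin n ≃ Fin n, IsStable RM RW ν →
    ∀ w, RW w (μ.symm w) ≤ RW w (ν.symm w)

/-- Two injective rank functions that differ must reverse some pair. -/
lemma exists_reversal {n : ℕ} {g g' : Fin n → Fin n}
    (hg : Function.Injective g) (hg' : Function.Injective g') (hne : g ≠ g') :
    ∃ a b, g a < g b ∧ g' b < g' a := by
  by_contra hcon
  push_neg at hcon
  apply hne
  have hbg : Function.Bijective g := (Finite.injective_iff_bijective).mp hg
  have hbg' : Function.Bijective g' := (Finite.injective_iff_bijective).mp hg'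
  set e := Equiv.ofBijective g hbg with he
  have hmono : StrictMono (g' ∘ e.symm) := by
    intro x y hxy
    have hx : g (e.symm x) = x := Equiv.ofBijective_apply_symm_apply g hbg x
    have hy : g (e.symm y) = y := Equiv.ofBijective_apply_symm_apply g hbg y
    have h1 : g (e.symm x) < g (e.symm y) := by rw [hx, hy]; exact hxy
    have h2 := hcon (e.symm x) (e.symm y) h1
    have hne2 : g' (e.symm x) ≠ g' (e.symm y) := by
      intro h; exact absurd (hg' h ▸ h1) (lt_irrefl _)
    exact lt_of_le_of_ne h2 hne2
  have hid : (g' ∘ e.symm) = id := by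
    have hrange : Set.range (g' ∘ e.symm) = Set.range (id : Fin n → Fin n) := by
      rw [Set.range_comp, Set.range_eq_univ.mpr e.symm.surjective]
      simp [Set.range_eq_univ.mpr hbg'.2]
    haveI : WellFoundedLT (Fin n) := inferInstance
    exact (StrictMono.range_inj hmono strictMono_id).mp hrange
  funext a
  have := congrFun hid (g a)
  simp only [Function.comp_apply, id_eq] at this
  rw [show e.symm (g a) = a from e.symm_apply_apply a] at this
  exact this.symm

theorem stmt15 {n : ℕ} (hn : 2 ≤ n) (R R' : Fin n → Fin n → Fin n)
    (hR : ∀ m, Function.Injective (R m)) (hR' : ∀ m, Function.Injective (R' m))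
    (hne : R ≠ R') :
    ∃ RW : Fin n → Fin n → Fin n, (∀ w, Function.Injective (RW w)) ∧
      ∀ μ μ' : Fin n ≃ Fin n,
        IsWomanOptimal R RW μ → IsWomanOptimal R' RW μ' → μ ≠ μ' := by
  haveI : NeZero n := ⟨by omega⟩
  have hval0 : (0 : Fin n).val = 0 := rfl
  have hval1 : (1 : Fin n).val = 1 := by
    have : (1 : Fin n).val = 1 % n := Fin.val_one' n
    rw [this]; exact Nat.mod_eq_of_lt (by omega)
  have h01 : (0 : Fin n) ≠ 1 := by
    intro h
    have h' := congrArg Fin.val h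
    rw [hval1, hval0] at h'
    exact absurd h' (by omega)
  -- find a man whose preferences differ, and a reversed pair of women
  obtain ⟨m₁, hm₁⟩ : ∃ m, R m ≠ R' m := by
    by_contra h; push_neg at h; exact hne (funext h)
  obtain ⟨w₁, w₂, h1, h2⟩ := exists_reversal (hR m₁) (hR' m₁) hm₁
  have hw : w₁ ≠ w₂ := fun h => absurd (h ▸ h1) (lt_irrefl _)
  haveI : Nontrivial (Fin n) := Fin.nontrivial_iff_two_le.mpr hn
  obtain ⟨m₂, hm2⟩ : ∃ m₂ : Fin n, m₂ ≠ m₁ := exists_ne m₁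
  -- the pairing bijection c : women → men with c w₁ = m₁, c w₂ = m₂
  set c1 : Fin n ≃ Fin n := Equiv.swap w₁ m₁ with hc1def
  have hc1w2 : c1 w₂ ≠ m₁ := by
    intro h
    have : c1 w₂ = c1 w₁ := by rw [h, hc1def, Equiv.swap_apply_left]
    exact hw (c1.injective this).symm
  set c : Fin n ≃ Fin n := c1.trans (Equiv.swap (c1 w₂) m₂) with hcdef
  have hcw1 : c w₁ = m₁ := by
    rw [hcdef]
    simp only [Equiv.trans_apply, hc1def, Equiv.swap_apply_left]
    exact Equiv.swap_apply_of_ne_of_ne (Ne.symm hc1w2) hm2.symm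
  have hcw2 : c w₂ = m₂ := by
    rw [hcdef]
    simp only [Equiv.trans_apply]
    exact Equiv.swap_apply_left _ _
  -- the rank permutation for w₁ and w₂ : m₁ ↦ 0, m₂ ↦ 1
  set r1 : Fin n ≃ Fin n := Equiv.swap m₁ (0 : Fin n) with hr1def
  have hr1m2 : r1 m₂ ≠ 0 := by
    intro h
    have : r1 m₂ = r1 m₁ := by rw [h, hr1def, Equiv.swap_apply_left]
    exact hm2 (r1.injective this)
  set ρ : Fin n ≃ Fin n := r1.trans (Equiv.swap (r1 m₂) (1 : Fin n)) with hρdef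
  have hρ1 : ρ m₁ = 0 := by
    rw [hρdef]
    simp only [Equiv.trans_apply, hr1def, Equiv.swap_apply_left]
    exact Equiv.swap_apply_of_ne_of_ne (Ne.symm hr1m2) h01
  have hρ2 : ρ m₂ = 1 := by
    rw [hρdef]
    simp only [Equiv.trans_apply]
    exact Equiv.swap_apply_left _ _
  -- the women's preference profile
  set RW : Fin n → Fin n → Fin n :=
    fun w m => if w = w₁ ∨ w = w₂ then ρ m else Equiv.swap (c w) (0 : Fin n) m
    with hRWdef
  have hRWw1 : ∀ m, RW w₁ m = ρ m := by intro m; simp [hRWdef]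
  have hRWw2 : ∀ m, RW w₂ m = ρ m := by intro m; simp [hRWdef]
  have hRWother : ∀ w, ¬(w = w₁ ∨ w = w₂) → ∀ m, RW w m = Equiv.swap (c w) (0 : Fin n) m := by
    intro w hw' m; simp [hRWdef, hw']
  refine ⟨RW, ?_, ?_⟩
  · intro w
    by_cases hcase : w = w₁ ∨ w = w₂
    · intro a b hab
      simp only [hRWdef, if_pos hcase] at hab
      exact ρ.injective hab
    · intro a b hab
      simp only [hRWdef, if_neg hcase] at hab
      exact (Equiv.swap (c w) (0 : Fin n)).injective hab
  intro μ μ' hopt hopt' heq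
  -- the explicit stable matching ν under (R, RW)
  set ν : Fin n ≃ Fin n := c.symm with hνdef
  have hνsymm : ∀ w, ν.symm w = c w := by intro w; simp [hνdef]
  have hνm1 : ν m₁ = w₁ := by rw [hνdef, ← hcw1, Equiv.symm_apply_apply]
  have hνstable : IsStable R RW ν := by
    intro m w ⟨hA, hB⟩
    by_cases hcase1 : w = w₁
    · subst hcase1
      rw [hνsymm, hcw1, hRWw1, hRWw1, hρ1] at hB
      rw [Fin.lt_def, hval0] at hB
      exact absurd hB (Nat.not_lt_zero _)
    by_cases hcase2 : w = w₂
    · subst hcase2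
      rw [hνsymm, hcw2, hRWw2, hRWw2, hρ2] at hB
      have hm : m = m₁ := by
        have hv : (ρ m).val < 1 := by
          have := (Fin.lt_iff_val_lt_val).mp hB
          rwa [hval1] at this
        have : ρ m = 0 := by
          apply Fin.val_injective; simpa using Nat.lt_one_iff.mp hv
        exact ρ.injective (by rw [this, hρ1])
      subst hm
      rw [hνm1] at hA
      exact absurd hA (not_lt.mpr (le_of_lt h1))
    · simp only [hνsymm, hRWother w (by tauto)] at hB
      rw [Equiv.swap_apply_left, Fin.lt_def, hval0] at hB
      exact absurd hB (Nat.not_lt_zero _)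
  -- the explicit stable matching ν' under (R', RW)
  set ν' : Fin n ≃ Fin n := ((Equiv.swap w₁ w₂).trans c).symm with hν'def
  have hν'symm : ∀ w, ν'.symm w = c (Equiv.swap w₁ w₂ w) := by
    intro w; simp [hν'def]
  have hν's1 : ν'.symm w₁ = m₂ := by rw [hν'symm, Equiv.swap_apply_left, hcw2]
  have hν's2 : ν'.symm w₂ = m₁ := by rw [hν'symm, Equiv.swap_apply_right, hcw1]
  have hν'm1 : ν' m₁ = w₂ := by rw [← hν's2, Equiv.apply_symm_apply]
  have hν'stable : IsStable R' RW ν' := by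
    intro m w ⟨hA, hB⟩
    by_cases hcase2 : w = w₂
    · subst hcase2
      rw [hν's2, hRWw2, hRWw2, hρ1] at hB
      rw [Fin.lt_def, hval0] at hB
      exact absurd hB (Nat.not_lt_zero _)
    by_cases hcase1 : w = w₁
    · subst hcase1
      rw [hν's1, hRWw1, hRWw1, hρ2] at hB
      have hm : m = m₁ := by
        have hv : (ρ m).val < 1 := by
          have := (Fin.lt_iff_val_lt_val).mp hB
          rwa [hval1] at this
        have : ρ m = 0 := by
          apply Fin.val_injective; simpa using Nat.lt_one_iff.mp hv
        exact ρ.injective (by rw [this, hρ1])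
      subst hm
      rw [hν'm1] at hA
      exact absurd hA (not_lt.mpr (le_of_lt h2))
    · simp only [hν'symm, Equiv.swap_apply_of_ne_of_ne hcase1 hcase2,
        hRWother w (by tauto)] at hB
      rw [Equiv.swap_apply_left, Fin.lt_def, hval0] at hB
      exact absurd hB (Nat.not_lt_zero _)
  -- any matching stable under (R, RW) cannot match w₂ with m₁
  have hB1 : μ.symm w₂ ≠ m₁ := by
    intro h
    have hμm1 : μ m₁ = w₂ := by rw [← h, Equiv.apply_symm_apply]
    apply hopt.1 m₁ w₁
    constructor
    · rw [hμm1]; exact h1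
    · rw [hRWw1, hRWw1, hρ1]
      have hne' : μ.symm w₁ ≠ m₁ := by
        intro h'
        exact hw (μ.symm.injective (h'.trans h.symm))
      have : ρ (μ.symm w₁) ≠ 0 := by
        intro h'
        exact hne' (ρ.injective (by rw [h', hρ1]))
      rw [Fin.lt_def, hval0]
      have hvne : (ρ (μ.symm w₁)).val ≠ 0 := fun h' =>
        this (Fin.val_injective (by rw [h', hval0]))
      omega
  -- μ matches w₂ with m₂
  have hμ2 : μ.symm w₂ = m₂ := by
    have hle := hopt.2 ν hνstable w₂
    rw [hνsymm, hcw2, hRWw2, hRWw2, hρ2] at hle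
    have hv : (ρ (μ.symm w₂)).val ≤ 1 := by
      have := (Fin.le_iff_val_le_val).mp hle
      rwa [hval1] at this
    have hnz : ρ (μ.symm w₂) ≠ 0 := by
      intro h'
      exact hB1 (ρ.injective (by rw [h', hρ1]))
    have : ρ (μ.symm w₂) = 1 := by
      apply Fin.val_injective
      rw [hval1]
      have : (ρ (μ.symm w₂)).val ≠ 0 := fun h' => hnz (Fin.val_injective (by simpa using h'))
      omega
    exact ρ.injective (by rw [this, hρ2])
  -- μ' matches w₂ with m₁
  have hμ'2 : μ'.symm w₂ = m₁ := by
    have hle := hopt'.2 ν' hν'stable w₂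
    rw [hν's2, hRWw2, hRWw2, hρ1] at hle
    have : ρ (μ'.symm w₂) = 0 := by
      apply Fin.val_injective
      rw [hval0]
      have := (Fin.le_iff_val_le_val).mp hle
      rw [hval0] at this
      omega
    exact ρ.injective (by rw [this, hρ1])
  rw [heq, hμ'2] at hμ2
  exact hm2 hμ2.symm
end
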